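/- arXiv:1110.3585 — 3 statements merged into one kernel-verified Lean document; each statement's English description precedes it below -/
import Mathlib

section
/- For a 2-form α on ℝ^5: α(φ(X),φ(Y)) = α(X,Y) for all X,Y if and only if α ∈ Λ²₁ ⊕ Λ²₃; α(φ(X),φ(Y)) = −α(X,Y) for all X,Y if and only if α ∈ Λ²₂; and α(φ(X),φ(Y)) = 0 for all X,Y if and only if α ∈ Λ²₄. -/
/-!
Since `α(φX, φY) = (φᵀ α φ)(X, Y)`, the three conditions say `φᵀ α φ = α`, `-α`, `0`, which are
explicit linear conditions on the coefficients of `α`. The conditions defining the `Λ²ᵢ`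
(`*α = ± η ∧ α`, `Φ ∧ α = 0`, `η ∧ α = 0`) are alternating in their indices, so they only need
to be checked on strictly increasing index tuples, where they too become explicit linear
conditions on the coefficients; comparing the two linear systems gives the theorem.
-/

open Matrix

/- 2-forms on ℝ^5 are modelled by skew-symmetric 5×5 real matrices
(A i j = α(e_i, e_j)); 3-forms and 4-forms by their coefficient functions. -/

abbrev M5 := Matrix (Fin 5) (Fin 5) ℝ

/-- The fundamental form Φ = e12 + e34 (as a skew-symmetric matrix). -/
def Phim : M5 :=
  !![0, 1, 0, 0, 0;
     -1, 0, 0, 0, 0;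
     0, 0, 0, 1, 0;
     0, 0, -1, 0, 0;
     0, 0, 0, 0, 0]

/-- The Levi-Civita symbol ε(p,q,i,j,k) on the oriented ℝ^5. -/
def eps (p q i j k : Fin 5) : ℝ :=
  Matrix.det (Matrix.of ![(Pi.single p 1 : Fin 5 → ℝ), Pi.single q 1,
    Pi.single i 1, Pi.single j 1, Pi.single k 1])

/-- Hodge star Λ² → Λ³: (*α)(e_i,e_j,e_k) = ½ Σ_{p,q} α_{pq} ε(p,q,i,j,k). -/
noncomputable def star3 (A : M5) (i j k : Fin 5) : ℝ :=
  (1 / 2) * ∑ p : Fin 5, ∑ q : Fin 5, A p q * eps p q i j k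

/-- Wedge with η = e5: (η∧α)(e_i,e_j,e_k). -/
def etaw (A : M5) (i j k : Fin 5) : ℝ :=
  (if i = (4 : Fin 5) then (1 : ℝ) else 0) * A j k
    - (if j = (4 : Fin 5) then (1 : ℝ) else 0) * A i k
    + (if k = (4 : Fin 5) then (1 : ℝ) else 0) * A i j

/-- Wedge with Φ: (Φ∧α)(e_i,e_j,e_k,e_l). -/
def phiw (A : M5) (i j k l : Fin 5) : ℝ :=
  Phim i j * A k l - Phim i k * A j l + Phim i l * A j k
    + Phim j k * A i l - Phim j l * A i k + Phim k l * A i j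

/-- Λ²₁ = ℝ·Φ. -/
def L1 : Set M5 := {A | ∃ t : ℝ, A = t • Phim}

/-- Λ²₂ = {α skew | Φ∧α = 0 and *α = η∧α}. -/
def L2 : Set M5 :=
  {A | Aᵀ = -A ∧ (∀ i j k l, phiw A i j k l = 0) ∧ ∀ i j k, star3 A i j k = etaw A i j k}

/-- Λ²₃ = {α skew | *α = -η∧α}. -/
def L3 : Set M5 := {A | Aᵀ = -A ∧ ∀ i j k, star3 A i j k = -etaw A i j k}

/-- Λ²₄ = {α skew | η∧α = 0}. -/
def L4 : Set M5 := {A | Aᵀ = -A ∧ ∀ i j k, etaw A i j k = 0}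

/-- The inner product on 2-forms, ⟨α,β⟩ = ½ Σ α_{ij} β_{ij}. -/
noncomputable def frob (A B : M5) : ℝ := (1 / 2) * ∑ i : Fin 5, ∑ j : Fin 5, A i j * B i j


/-- The bilinear form corresponding to a matrix A: α(X,Y) = Xᵀ A Y. -/
noncomputable def bilin (A : M5) (X Y : Fin 5 → ℝ) : ℝ := X ⬝ᵥ A.mulVec Y

open Equiv

section Alternating

variable {α M : Type*} [AddGroup M] {n : ℕ}

theorem comp_perm_eq_or_eq_neg (f : (Fin (n + 1) → α) → M)
    (hswap : ∀ v (i : Fin n), f (v ∘ swap i.castSucc i.succ) = -f v)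
    (σ : Perm (Fin (n + 1))) (v : Fin (n + 1) → α) : f (v ∘ σ) = f v ∨ f (v ∘ σ) = -f v := by
  induction σ using Submonoid.induction_of_closure_eq_top_right
    (Perm.mclosure_swap_castSucc_succ n) generalizing v with
  | one => exact Or.inl rfl
  | mul_right σ τ hτ ih =>
    obtain ⟨i, rfl⟩ := hτ
    rw [Perm.coe_mul, ← Function.comp_assoc, hswap]
    rcases ih v with h | h <;> simp [h]

/-- Sorting `v` changes `f v` at most by a sign; a sorted tuple that is not strictly
increasing has two equal adjacent entries, and swapping them shows that `f` vanishes there. -/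
theorem eq_zero_of_swap_eq_neg [LinearOrder α] [IsAddTorsionFree M]
    (f : (Fin (n + 1) → α) → M)
    (hswap : ∀ v (i : Fin n), f (v ∘ swap i.castSucc i.succ) = -f v)
    (hmono : ∀ v, StrictMono v → f v = 0) (v : Fin (n + 1) → α) : f v = 0 := by
  set w := v ∘ Tuple.sort v
  have hw : f w = 0 := by
    by_cases hstrict : StrictMono w
    · exact hmono w hstrict
    obtain ⟨i, hi⟩ : ∃ i : Fin n, w i.castSucc = w i.succ := by
      simp only [Fin.strictMono_iff_lt_succ, not_forall] at hstrict
      obtain ⟨i, hi⟩ := hstrict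
      exact ⟨i, le_antisymm (Tuple.monotone_sort v (Fin.castSucc_le_succ i)) (not_lt.1 hi)⟩
    have hfix : w ∘ swap i.castSucc i.succ = w := by
      rw [comp_swap_eq_update, hi, Function.update_eq_self, ← hi, Function.update_eq_self]
    have hneg := hswap w i
    rw [hfix] at hneg
    exact self_eq_neg.1 hneg
  rcases comp_perm_eq_or_eq_neg f hswap (Tuple.sort v) v with h | h
  · rwa [← h]
  · rwa [h, neg_eq_zero] at hw

theorem forall₃_eq_zero_iff_of_lt [LinearOrder α] [IsAddTorsionFree M]
    (g : α → α → α → M)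
    (h₀₁ : ∀ a b c, g b a c = -g a b c) (h₁₂ : ∀ a b c, g a c b = -g a b c) :
    (∀ a b c, g a b c = 0) ↔ ∀ a b c, a < b → b < c → g a b c = 0 := by
  refine ⟨fun h a b c _ _ => h a b c, fun h a b c => ?_⟩
  refine eq_zero_of_swap_eq_neg (fun v => g (v 0) (v 1) (v 2)) ?_
    (fun v hv => h _ _ _ (hv (by decide)) (hv (by decide))) ![a, b, c]
  intro v i
  fin_cases i
  · simpa [swap_apply_of_ne_of_ne] using h₀₁ (v 0) (v 1) (v 2)
  · simpa [swap_apply_of_ne_of_ne] using h₁₂ (v 0) (v 1) (v 2)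

theorem forall₄_eq_zero_iff_of_lt [LinearOrder α] [IsAddTorsionFree M]
    (g : α → α → α → α → M)
    (h₀₁ : ∀ a b c d, g b a c d = -g a b c d) (h₁₂ : ∀ a b c d, g a c b d = -g a b c d)
    (h₂₃ : ∀ a b c d, g a b d c = -g a b c d) :
    (∀ a b c d, g a b c d = 0) ↔ ∀ a b c d, a < b → b < c → c < d → g a b c d = 0 := by
  refine ⟨fun h a b c d _ _ _ => h a b c d, fun h a b c d => ?_⟩
  refine eq_zero_of_swap_eq_neg (fun v => g (v 0) (v 1) (v 2) (v 3)) ?_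
    (fun v hv => h _ _ _ _ (hv (by decide)) (hv (by decide)) (hv (by decide))) ![a, b, c, d]
  intro v i
  fin_cases i
  · simpa [swap_apply_of_ne_of_ne] using h₀₁ (v 0) (v 1) (v 2) (v 3)
  · simpa [swap_apply_of_ne_of_ne] using h₁₂ (v 0) (v 1) (v 2) (v 3)
  · simpa [swap_apply_of_ne_of_ne] using h₂₃ (v 0) (v 1) (v 2) (v 3)

end Alternating

lemma skew_apply {A : M5} (hA : Aᵀ = -A) (i j : Fin 5) : A j i = -A i j := by
  simpa using congrFun (congrFun hA i) j

lemma skew_entries {A : M5} (hA : Aᵀ = -A) :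
    A 0 0 = 0 ∧ A 1 1 = 0 ∧ A 2 2 = 0 ∧ A 3 3 = 0 ∧ A 4 4 = 0 ∧
    A 1 0 = -A 0 1 ∧ A 2 0 = -A 0 2 ∧ A 3 0 = -A 0 3 ∧ A 4 0 = -A 0 4 ∧ A 2 1 = -A 1 2 ∧
    A 3 1 = -A 1 3 ∧ A 4 1 = -A 1 4 ∧ A 3 2 = -A 2 3 ∧ A 4 2 = -A 2 4 ∧ A 4 3 = -A 3 4 := by
  have hdiag : ∀ i, A i i = 0 := fun i => by linarith [skew_apply hA i i]
  exact ⟨hdiag 0, hdiag 1, hdiag 2, hdiag 3, hdiag 4, skew_apply hA .., skew_apply hA ..,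
    skew_apply hA .., skew_apply hA .., skew_apply hA .., skew_apply hA .., skew_apply hA ..,
    skew_apply hA .., skew_apply hA .., skew_apply hA ..⟩

lemma Phim_transpose : Phimᵀ = -Phim := by
  ext i j
  fin_cases i <;> fin_cases j <;> simp [Phim]

lemma bilin_eq_toBilin' (A : M5) (X Y : Fin 5 → ℝ) : bilin A X Y = A.toBilin' X Y :=
  (toBilin'_apply' A X Y).symm

lemma bilin_neg (A : M5) (X Y : Fin 5 → ℝ) : bilin (-A) X Y = -bilin A X Y := by
  simp [bilin, neg_mulVec]

lemma bilin_zero (X Y : Fin 5 → ℝ) : bilin 0 X Y = 0 := by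
  simp [bilin]

theorem forall_bilin_mulVec_eq_iff (P A B : M5) :
    (∀ X Y, bilin A (P *ᵥ X) (P *ᵥ Y) = bilin B X Y) ↔ Pᵀ * A * P = B := by
  simp only [bilin_eq_toBilin', ← toLin'_apply, ← LinearMap.BilinForm.comp_apply, toBilin'_comp]
  rw [← LinearMap.BilinForm.ext_iff, toBilin'.injective.eq_iff]

theorem conj_Phim_eq_self_iff {A : M5} (hA : Aᵀ = -A) : Phimᵀ * A * Phim = A ↔
    A 0 2 = A 1 3 ∧ A 0 3 = -A 1 2 ∧ A 0 4 = 0 ∧ A 1 4 = 0 ∧ A 2 4 = 0 ∧ A 3 4 = 0 := by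
  rw [← Matrix.ext_iff]
  simp [Fin.forall_fin_succ, mul_apply, Fin.sum_univ_five, Phim, skew_entries hA]
  grind

theorem conj_Phim_eq_neg_iff {A : M5} (hA : Aᵀ = -A) : Phimᵀ * A * Phim = -A ↔
    A 0 1 = 0 ∧ A 2 3 = 0 ∧ A 0 2 = -A 1 3 ∧ A 0 3 = A 1 2 ∧
      A 0 4 = 0 ∧ A 1 4 = 0 ∧ A 2 4 = 0 ∧ A 3 4 = 0 := by
  rw [← Matrix.ext_iff]
  simp [Fin.forall_fin_succ, mul_apply, Fin.sum_univ_five, Phim, skew_entries hA]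
  grind

theorem conj_Phim_eq_zero_iff {A : M5} (hA : Aᵀ = -A) : Phimᵀ * A * Phim = 0 ↔
    A 0 1 = 0 ∧ A 0 2 = 0 ∧ A 0 3 = 0 ∧ A 1 2 = 0 ∧ A 1 3 = 0 ∧ A 2 3 = 0 := by
  rw [← Matrix.ext_iff]
  simp [Fin.forall_fin_succ, mul_apply, Fin.sum_univ_five, Phim, skew_entries hA]
  grind

lemma eps_swap_ij (p q i j k : Fin 5) : eps p q j i k = -eps p q i j k := by
  have h : of ![(Pi.single p 1 : Fin 5 → ℝ), Pi.single q 1, Pi.single j 1, Pi.single i 1,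
      Pi.single k 1] = (of ![Pi.single p 1, Pi.single q 1, Pi.single i 1, Pi.single j 1,
      Pi.single k 1]).submatrix (swap 2 3) id := by
    ext r : 1; fin_cases r <;> rfl
  rw [eps, h, det_permute, Perm.sign_swap (by decide), Units.val_neg, Units.val_one,
    Int.cast_neg, Int.cast_one, neg_one_mul, eps]

lemma eps_swap_jk (p q i j k : Fin 5) : eps p q i k j = -eps p q i j k := by
  have h : of ![(Pi.single p 1 : Fin 5 → ℝ), Pi.single q 1, Pi.single i 1, Pi.single k 1,
      Pi.single j 1] = (of ![Pi.single p 1, Pi.single q 1, Pi.single i 1, Pi.single j 1,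
      Pi.single k 1]).submatrix (swap 3 4) id := by
    ext r : 1; fin_cases r <;> rfl
  rw [eps, h, det_permute, Perm.sign_swap (by decide), Units.val_neg, Units.val_one,
    Int.cast_neg, Int.cast_one, neg_one_mul, eps]

lemma star3_swap_ij (A : M5) (i j k : Fin 5) : star3 A j i k = -star3 A i j k := by
  simp only [star3, eps_swap_ij _ _ i j k, mul_neg, Finset.sum_neg_distrib]

lemma star3_swap_jk (A : M5) (i j k : Fin 5) : star3 A i k j = -star3 A i j k := by
  simp only [star3, eps_swap_jk _ _ i j k, mul_neg, Finset.sum_neg_distrib]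

lemma etaw_swap_ij {A : M5} (hA : Aᵀ = -A) (i j k : Fin 5) :
    etaw A j i k = -etaw A i j k := by
  simp only [etaw]
  linear_combination (if k = 4 then (1 : ℝ) else 0) * skew_apply hA i j

lemma etaw_swap_jk {A : M5} (hA : Aᵀ = -A) (i j k : Fin 5) :
    etaw A i k j = -etaw A i j k := by
  simp only [etaw]
  linear_combination (if i = 4 then (1 : ℝ) else 0) * skew_apply hA j k

lemma phiw_swap_ij {A : M5} (hA : Aᵀ = -A) (i j k l : Fin 5) :
    phiw A j i k l = -phiw A i j k l := by
  simp only [phiw]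
  linear_combination A k l * skew_apply Phim_transpose i j + Phim k l * skew_apply hA i j

lemma phiw_swap_jk {A : M5} (hA : Aᵀ = -A) (i j k l : Fin 5) :
    phiw A i k j l = -phiw A i j k l := by
  simp only [phiw]
  linear_combination Phim i l * skew_apply hA j k + A i l * skew_apply Phim_transpose j k

lemma phiw_swap_kl {A : M5} (hA : Aᵀ = -A) (i j k l : Fin 5) :
    phiw A i j l k = -phiw A i j k l := by
  simp only [phiw]
  linear_combination Phim i j * skew_apply hA k l + A i j * skew_apply Phim_transpose k l

theorem star3_eq_mul_etaw_iff {A : M5} (hA : Aᵀ = -A) (c : ℝ) :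
    (∀ i j k, star3 A i j k = c * etaw A i j k) ↔
      A 0 4 = 0 ∧ A 1 4 = 0 ∧ A 2 4 = 0 ∧ A 3 4 = 0 ∧ A 2 3 = c * A 0 1 ∧ A 0 1 = c * A 2 3 ∧
        A 1 2 = c * A 0 3 ∧ A 0 3 = c * A 1 2 ∧ A 1 3 = -c * A 0 2 ∧ A 0 2 = -c * A 1 3 := by
  have hsorted := forall₃_eq_zero_iff_of_lt (fun i j k => star3 A i j k - c * etaw A i j k)
    (fun i j k => by rw [star3_swap_ij, etaw_swap_ij hA]; ring)
    (fun i j k => by rw [star3_swap_jk, etaw_swap_jk hA]; ring)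
  simp only [sub_eq_zero] at hsorted
  rw [hsorted]
  simp [Fin.forall_fin_succ, star3, eps, det_succ_row_zero, Fin.sum_univ_succ, Fin.succAbove,
    Pi.single_apply, etaw, skew_entries hA]
  grind

theorem phiw_eq_zero_iff {A : M5} (hA : Aᵀ = -A) :
    (∀ i j k l, phiw A i j k l = 0) ↔
      A 0 1 + A 2 3 = 0 ∧ A 0 4 = 0 ∧ A 1 4 = 0 ∧ A 2 4 = 0 ∧ A 3 4 = 0 := by
  rw [forall₄_eq_zero_iff_of_lt (phiw A) (phiw_swap_ij hA) (phiw_swap_jk hA)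
    (phiw_swap_kl hA)]
  simp [Fin.forall_fin_succ, phiw, Phim, skew_entries hA]
  grind

theorem etaw_eq_zero_iff {A : M5} (hA : Aᵀ = -A) :
    (∀ i j k, etaw A i j k = 0) ↔
      A 0 1 = 0 ∧ A 0 2 = 0 ∧ A 0 3 = 0 ∧ A 1 2 = 0 ∧ A 1 3 = 0 ∧ A 2 3 = 0 := by
  rw [forall₃_eq_zero_iff_of_lt (etaw A) (etaw_swap_ij hA) (etaw_swap_jk hA)]
  simp [Fin.forall_fin_succ, etaw, skew_entries hA]
  grind

theorem mem_L3_iff {A : M5} (hA : Aᵀ = -A) : A ∈ L3 ↔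
    A 0 1 = -A 2 3 ∧ A 0 2 = A 1 3 ∧ A 0 3 = -A 1 2 ∧
      A 0 4 = 0 ∧ A 1 4 = 0 ∧ A 2 4 = 0 ∧ A 3 4 = 0 := by
  have hstar := star3_eq_mul_etaw_iff hA (-1)
  simp only [neg_one_mul] at hstar
  simp only [L3, Set.mem_ofPred_eq, hA, true_and, hstar]
  grind

theorem mem_L1_add_L3_iff {A : M5} (hA : Aᵀ = -A) : (∃ B ∈ L1, ∃ C ∈ L3, A = B + C) ↔
    A 0 2 = A 1 3 ∧ A 0 3 = -A 1 2 ∧ A 0 4 = 0 ∧ A 1 4 = 0 ∧ A 2 4 = 0 ∧ A 3 4 = 0 := by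
  constructor
  · rintro ⟨_, ⟨t, rfl⟩, C, hC, rfl⟩
    obtain ⟨-, h02, h03, h04, h14, h24, h34⟩ := (mem_L3_iff hC.1).1 hC
    simp [Phim, h02, h03, h04, h14, h24, h34]
  · rintro ⟨h02, h03, h04, h14, h24, h34⟩
    -- the `Λ²₁`-component: `t` is the average of the `e12` and `e34` coefficients
    set t := (A 0 1 + A 2 3) / 2
    have hC : (A - t • Phim)ᵀ = -(A - t • Phim) := by
      rw [transpose_sub, transpose_smul, hA, Phim_transpose, smul_neg, neg_sub_neg, neg_sub]
    refine ⟨t • Phim, ⟨t, rfl⟩, A - t • Phim, (mem_L3_iff hC).2 ?_, by abel⟩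
    have h01 : A 0 1 - t = -(A 2 3 - t) := by ring
    simpa [Phim, h02, h03, h04, h14, h24, h34] using h01

theorem mem_L2_iff {A : M5} (hA : Aᵀ = -A) : A ∈ L2 ↔
    A 0 1 = 0 ∧ A 2 3 = 0 ∧ A 0 2 = -A 1 3 ∧ A 0 3 = A 1 2 ∧
      A 0 4 = 0 ∧ A 1 4 = 0 ∧ A 2 4 = 0 ∧ A 3 4 = 0 := by
  have hstar := star3_eq_mul_etaw_iff hA 1
  simp only [one_mul] at hstar
  simp only [L2, Set.mem_ofPred_eq, hA, true_and, phiw_eq_zero_iff hA, hstar]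
  grind

theorem mem_L4_iff {A : M5} (hA : Aᵀ = -A) : A ∈ L4 ↔
    A 0 1 = 0 ∧ A 0 2 = 0 ∧ A 0 3 = 0 ∧ A 1 2 = 0 ∧ A 1 3 = 0 ∧ A 2 3 = 0 := by
  simp only [L4, Set.mem_ofPred_eq, hA, true_and, etaw_eq_zero_iff hA]

/-- for a 2-form α: α(φX,φY) = α(X,Y) iff α ∈ Λ²₁ ⊕ Λ²₃;
α(φX,φY) = -α(X,Y) iff α ∈ Λ²₂; α(φX,φY) = 0 iff α ∈ Λ²₄. -/
theorem stmt3 :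
    ∀ A : M5, Aᵀ = -A →
      ((∀ X Y, bilin A (Phim.mulVec X) (Phim.mulVec Y) = bilin A X Y) ↔
        ∃ B ∈ L1, ∃ C ∈ L3, A = B + C) ∧
      ((∀ X Y, bilin A (Phim.mulVec X) (Phim.mulVec Y) = -bilin A X Y) ↔ A ∈ L2) ∧
      ((∀ X Y, bilin A (Phim.mulVec X) (Phim.mulVec Y) = 0) ↔ A ∈ L4) := by
  intro A hA
  have hneg := forall_bilin_mulVec_eq_iff Phim A (-A)
  have hzero := forall_bilin_mulVec_eq_iff Phim A 0
  simp only [bilin_neg, bilin_zero] at hneg hzero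
  rw [forall_bilin_mulVec_eq_iff, hneg, hzero, conj_Phim_eq_self_iff hA, conj_Phim_eq_neg_iff hA,
    conj_Phim_eq_zero_iff hA, mem_L1_add_L3_iff hA, mem_L2_iff hA, mem_L4_iff hA]
  exact ⟨Iff.rfl, Iff.rfl, Iff.rfl⟩
end

section
/- The space 𝒯 of trilinear forms on ℝ^5 skew-symmetric in the first two arguments decomposes as the direct sum 𝒯₁ ⊕ 𝒯₂ ⊕ 𝒯₃, where 𝒯₁ = {T : ∃ a 1-form α with T(X,Y,Z) = α(X)⟨Y,Z⟩ − α(Y)⟨X,Z⟩}, 𝒯₂ = {T : T(X,Y,Z) = −T(X,Z,Y)} (totally skew-symmetric), and 𝒯₃ = {T : the cyclic sum of T over X,Y,Z vanishes and Σᵢ T(X,eᵢ,eᵢ) = 0}. -/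
/- Trilinear forms on the Euclidean space ℝ^5 = Fin 5 → ℝ are modelled as
functions E → E → E → ℝ together with the trilinearity predicate `IsTri`. -/

abbrev E := Fin 5 → ℝ

/-- The standard inner product of ℝ^5. -/
def dot (X Y : E) : ℝ := ∑ i : Fin 5, X i * Y i

/-- The standard orthonormal basis e₁,…,e₅. -/
def bas (i : Fin 5) : E := Pi.single i 1

/-- Trilinearity of a map E → E → E → ℝ. -/
def IsTri (T : E → E → E → ℝ) : Prop :=
  (∀ a a' b c, T (a + a') b c = T a b c + T a' b c) ∧
  (∀ (r : ℝ) a b c, T (r • a) b c = r * T a b c) ∧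
  (∀ a b b' c, T a (b + b') c = T a b c + T a b' c) ∧
  (∀ (r : ℝ) a b c, T a (r • b) c = r * T a b c) ∧
  (∀ a b c c', T a b (c + c') = T a b c + T a b c') ∧
  (∀ (r : ℝ) a b c, T a b (r • c) = r * T a b c)

/-- 𝒯 = trilinear forms skew-symmetric in the first two arguments. -/
def TT : Set (E → E → E → ℝ) := {T | IsTri T ∧ ∀ X Y Z, T X Y Z = -T Y X Z}

/-- 𝒜 = trilinear forms skew-symmetric in the last two arguments. -/
def AA : Set (E → E → E → ℝ) := {A | IsTri A ∧ ∀ X Y Z, A X Y Z = -A X Z Y}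

/-- τ(A)(X,Y,Z) = A(X,Y,Z) - A(Y,X,Z). -/
def tau (A : E → E → E → ℝ) : E → E → E → ℝ := fun X Y Z => A X Y Z - A Y X Z

/-- 𝒯₁: vectorial torsion. -/
def T1 : Set (E → E → E → ℝ) :=
  {T | T ∈ TT ∧ ∃ α : E →ₗ[ℝ] ℝ, ∀ X Y Z, T X Y Z = α X * dot Y Z - α Y * dot X Z}

/-- 𝒯₂: totally skew-symmetric torsion. -/
def T2 : Set (E → E → E → ℝ) := {T | T ∈ TT ∧ ∀ X Y Z, T X Y Z = -T X Z Y}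

/-- 𝒯₃: traceless cyclic torsion. -/
def T3 : Set (E → E → E → ℝ) :=
  {T | T ∈ TT ∧ (∀ X Y Z, T X Y Z + T Y Z X + T Z X Y = 0) ∧
    ∀ X, ∑ i : Fin 5, T X (bas i) (bas i) = 0}

/-- 𝒜₁: vectorial type. -/
def A1 : Set (E → E → E → ℝ) :=
  {A | A ∈ AA ∧ ∃ α : E →ₗ[ℝ] ℝ, ∀ X Y Z, A X Y Z = α Z * dot X Y - α Y * dot X Z}

/-- 𝒜₂: totally skew-symmetric type. -/
def A2 : Set (E → E → E → ℝ) := {A | A ∈ AA ∧ ∀ X Y Z, A X Y Z = -A Y X Z}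

/-- 𝒜₃: traceless cyclic type. -/
def A3 : Set (E → E → E → ℝ) :=
  {A | A ∈ AA ∧ (∀ X Y Z, A X Y Z + A Y Z X + A Z X Y = 0) ∧
    ∀ X, ∑ i : Fin 5, A (bas i) (bas i) X = 0}

/-! The trace `X ↦ ∑ᵢ T(X,eᵢ,eᵢ)` and the cyclic sum separate the three summands: on the
𝒯₁-form of `α` the trace is `4α` (`4 = dim - 1`) and the cyclic sum vanishes, on 𝒯₂ the trace
vanishes and the cyclic sum is `3T`, and on 𝒯₃ both vanish. Hence in any decomposition
`T = T₁ + T₂ + T₃`, `T₁` is the 𝒯₁-form of `trace T / 4` and `T₂` is a third of the cyclic sum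
of `T`, which forces `T₃`. Conversely, for `T ∈ 𝒯` a third of the cyclic sum is totally skew, so
the remainder `T - T₁ - T₂` has vanishing trace and cyclic sum, i.e. lies in 𝒯₃. -/

namespace TorsionDecomposition

lemma dot_eq_dotProduct (X Y : E) : dot X Y = X ⬝ᵥ Y := rfl

lemma dot_bas (X : E) (i : Fin 5) : dot X (bas i) = X i :=
  dotProduct_single_one X i

lemma sum_smul_bas (X : E) : ∑ i, X i • bas i = X := by
  ext j
  simp [bas, Pi.single_apply]

lemma apply_eq_sum_bas (α : E →ₗ[ℝ] ℝ) (X : E) : α X = ∑ i, α (bas i) * X i := by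
  conv_lhs => rw [← sum_smul_bas X]
  simp [map_sum, mul_comm]

def trace (T : E → E → E → ℝ) (X : E) : ℝ := ∑ i, T X (bas i) (bas i)

def cyclicSum (T : E → E → E → ℝ) : E → E → E → ℝ := fun X Y Z => T X Y Z + T Y Z X + T Z X Y

def vectorial (α : E → ℝ) : E → E → E → ℝ := fun X Y Z => α X * dot Y Z - α Y * dot X Z

lemma trace_add (S T : E → E → E → ℝ) (X : E) : trace (S + T) X = trace S X + trace T X :=
  Finset.sum_add_distrib

lemma trace_sub (S T : E → E → E → ℝ) (X : E) : trace (S - T) X = trace S X - trace T X :=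
  Finset.sum_sub_distrib ..

lemma cyclicSum_add (S T : E → E → E → ℝ) : cyclicSum (S + T) = cyclicSum S + cyclicSum T := by
  funext X Y Z
  simp only [cyclicSum, Pi.add_apply]
  ring

lemma cyclicSum_sub (S T : E → E → E → ℝ) : cyclicSum (S - T) = cyclicSum S - cyclicSum T := by
  funext X Y Z
  simp only [cyclicSum, Pi.sub_apply]
  ring

section IsTri

variable {S T : E → E → E → ℝ}

lemma IsTri.sub (hS : IsTri S) (hT : IsTri T) : IsTri (S - T) := by
  obtain ⟨s1, s2, s3, s4, s5, s6⟩ := hS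
  obtain ⟨t1, t2, t3, t4, t5, t6⟩ := hT
  refine ⟨?_, ?_, ?_, ?_, ?_, ?_⟩ <;> intros <;>
    simp only [Pi.sub_apply, s1, s2, s3, s4, s5, s6, t1, t2, t3, t4, t5, t6] <;> ring

lemma IsTri.smul (r : ℝ) (hT : IsTri T) : IsTri (r • T) := by
  obtain ⟨t1, t2, t3, t4, t5, t6⟩ := hT
  refine ⟨?_, ?_, ?_, ?_, ?_, ?_⟩ <;> intros <;>
    simp only [Pi.smul_apply, smul_eq_mul, t1, t2, t3, t4, t5, t6] <;> ring

lemma IsTri.cyclicSum (hT : IsTri T) : IsTri (cyclicSum T) := by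
  obtain ⟨t1, t2, t3, t4, t5, t6⟩ := hT
  refine ⟨?_, ?_, ?_, ?_, ?_, ?_⟩ <;> intros <;>
    simp only [TorsionDecomposition.cyclicSum, t1, t2, t3, t4, t5, t6] <;> ring

lemma IsTri.isLinearMap_smul_trace (r : ℝ) (hT : IsTri T) : IsLinearMap ℝ (r • trace T) where
  map_add X X' := by simp only [Pi.smul_apply, trace, hT.1, Finset.sum_add_distrib, smul_add]
  map_smul c X := by
    simp only [Pi.smul_apply, trace, hT.2.1, smul_eq_mul, ← Finset.mul_sum]
    ring

end IsTri

lemma sub_mem_TT {S T : E → E → E → ℝ} (hS : S ∈ TT) (hT : T ∈ TT) : S - T ∈ TT :=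
  ⟨IsTri.sub hS.1 hT.1, fun X Y Z => by simp only [Pi.sub_apply, hS.2 X Y Z, hT.2 X Y Z]; ring⟩

lemma vectorial_mem_T1 {α : E → ℝ} (hα : IsLinearMap ℝ α) : vectorial α ∈ T1 := by
  refine ⟨⟨⟨?_, ?_, ?_, ?_, ?_, ?_⟩, fun X Y Z => ?_⟩, hα.mk' α, fun X Y Z => rfl⟩ <;> intros <;>
    simp only [vectorial, dot_eq_dotProduct, hα.map_add, hα.map_smul, smul_eq_mul, add_dotProduct,
      dotProduct_add, smul_dotProduct, dotProduct_smul] <;> ring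

lemma trace_vectorial {α : E → ℝ} (hα : IsLinearMap ℝ α) (X : E) :
    trace (vectorial α) X = 4 * α X := by
  have hdiag : ∀ i, dot (bas i) (bas i) = 1 := fun i => by rw [dot_bas]; simp [bas]
  have hexp : α X = ∑ i, α (bas i) * X i := apply_eq_sum_bas (hα.mk' α) X
  simp only [trace, vectorial, hdiag, dot_bas, Finset.sum_sub_distrib, ← hexp]
  simp only [mul_one, Finset.sum_const, Finset.card_univ, Fintype.card_fin, nsmul_eq_mul,
    Nat.cast_ofNat]
  ring

lemma cyclicSum_vectorial (α : E → ℝ) : cyclicSum (vectorial α) = 0 := by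
  funext X Y Z
  simp only [cyclicSum, vectorial, dot_eq_dotProduct, dotProduct_comm Y X, dotProduct_comm Z Y,
    dotProduct_comm Z X, Pi.zero_apply]
  ring

section Parts

variable {T : E → E → E → ℝ}

lemma trace_eq_zero_of_mem_T2 (hT : T ∈ T2) : trace T = 0 := by
  funext X
  refine Finset.sum_eq_zero fun i _ => ?_
  linarith [hT.2 X (bas i) (bas i)]

lemma cyclicSum_eq_of_mem_T2 (hT : T ∈ T2) : cyclicSum T = (3 : ℝ) • T := by
  funext X Y Z
  have hYZX : T Y Z X = T X Y Z := by linarith [hT.2 Y Z X, hT.1.2 Y X Z]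
  have hZXY : T Z X Y = T X Y Z := by linarith [hT.1.2 Z X Y, hT.2 X Z Y]
  simp only [cyclicSum, hYZX, hZXY, Pi.smul_apply, smul_eq_mul]
  ring

lemma trace_eq_zero_of_mem_T3 (hT : T ∈ T3) : trace T = 0 :=
  funext hT.2.2

lemma cyclicSum_eq_zero_of_mem_T3 (hT : T ∈ T3) : cyclicSum T = 0 :=
  funext₃ hT.2.1

noncomputable def vectorialPart (T : E → E → E → ℝ) : E → E → E → ℝ :=
  vectorial ((4 : ℝ)⁻¹ • trace T)

noncomputable def skewPart (T : E → E → E → ℝ) : E → E → E → ℝ := (3 : ℝ)⁻¹ • cyclicSum T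

lemma vectorialPart_mem_T1 (hT : T ∈ TT) : vectorialPart T ∈ T1 :=
  vectorial_mem_T1 (IsTri.isLinearMap_smul_trace _ hT.1)

lemma skewPart_mem_T2 (hT : T ∈ TT) : skewPart T ∈ T2 := by
  refine ⟨⟨IsTri.smul _ (IsTri.cyclicSum hT.1), fun X Y Z => ?_⟩, fun X Y Z => ?_⟩ <;>
    simp only [skewPart, cyclicSum, Pi.smul_apply, smul_eq_mul] <;>
    linarith [hT.2 X Y Z, hT.2 Y Z X, hT.2 Z X Y, hT.2 X Z Y, hT.2 Z Y X, hT.2 Y X Z]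

lemma sub_vectorialPart_sub_skewPart_mem_T3 (hT : T ∈ TT) :
    T - vectorialPart T - skewPart T ∈ T3 := by
  have hcyc : cyclicSum (T - vectorialPart T - skewPart T) = 0 := by
    rw [cyclicSum_sub, cyclicSum_sub, vectorialPart, cyclicSum_vectorial,
      cyclicSum_eq_of_mem_T2 (skewPart_mem_T2 hT), skewPart, smul_smul]
    norm_num
  refine ⟨sub_mem_TT (sub_mem_TT hT (vectorialPart_mem_T1 hT).1) (skewPart_mem_T2 hT).1,
    fun X Y Z => congrFun₃ hcyc X Y Z, fun X => ?_⟩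
  change trace _ X = 0
  rw [trace_sub, trace_sub, vectorialPart, trace_vectorial (IsTri.isLinearMap_smul_trace _ hT.1),
    trace_eq_zero_of_mem_T2 (skewPart_mem_T2 hT)]
  simp only [Pi.smul_apply, smul_eq_mul, Pi.zero_apply]
  ring

end Parts

section Uniqueness

variable {q₁ q₂ q₃ : E → E → E → ℝ}

lemma vectorialPart_add_add (h₁ : q₁ ∈ T1) (h₂ : q₂ ∈ T2) (h₃ : q₃ ∈ T3) :
    vectorialPart (q₁ + q₂ + q₃) = q₁ := by
  obtain ⟨-, β, hβ⟩ := h₁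
  obtain rfl : q₁ = vectorial β := funext₃ hβ
  have htrace : (4 : ℝ)⁻¹ • trace (vectorial β + q₂ + q₃) = β := by
    funext X
    rw [Pi.smul_apply, trace_add, trace_add, trace_vectorial β.isLinear,
      trace_eq_zero_of_mem_T2 h₂, trace_eq_zero_of_mem_T3 h₃, smul_eq_mul, Pi.zero_apply]
    ring
  rw [vectorialPart, htrace]

lemma skewPart_add_add (h₁ : q₁ ∈ T1) (h₂ : q₂ ∈ T2) (h₃ : q₃ ∈ T3) :
    skewPart (q₁ + q₂ + q₃) = q₂ := by
  obtain ⟨-, β, hβ⟩ := h₁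
  obtain rfl : q₁ = vectorial β := funext₃ hβ
  rw [skewPart, cyclicSum_add, cyclicSum_add, cyclicSum_vectorial, cyclicSum_eq_of_mem_T2 h₂,
    cyclicSum_eq_zero_of_mem_T3 h₃, zero_add, add_zero, smul_smul]
  norm_num

end Uniqueness

end TorsionDecomposition

open TorsionDecomposition

/-- 𝒯 = 𝒯₁ ⊕ 𝒯₂ ⊕ 𝒯₃. -/
theorem stmt6 :
    ∀ T ∈ TT, ∃! p : (E → E → E → ℝ) × (E → E → E → ℝ) × (E → E → E → ℝ),
      p.1 ∈ T1 ∧ p.2.1 ∈ T2 ∧ p.2.2 ∈ T3 ∧ T = p.1 + p.2.1 + p.2.2 := by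
  intro T hT
  refine ⟨(vectorialPart T, skewPart T, T - vectorialPart T - skewPart T),
    ⟨vectorialPart_mem_T1 hT, skewPart_mem_T2 hT, sub_vectorialPart_sub_skewPart_mem_T3 hT,
      by dsimp only; abel⟩, ?_⟩
  rintro ⟨q₁, q₂, q₃⟩ ⟨h₁, h₂, h₃, rfl⟩
  rw [vectorialPart_add_add h₁ h₂ h₃, skewPart_add_add h₁ h₂ h₃, Prod.mk.injEq, Prod.mk.injEq]
  exact ⟨rfl, rfl, by abel⟩
end

section
/- The bijection τ(A)(X,Y,Z) = A(X,Y,Z) − A(Y,X,Z) maps 𝒜₁ onto 𝒯₁, 𝒜₂ onto 𝒯₂, and 𝒜₃ onto 𝒯₃ (with 𝒜ᵢ, 𝒯ᵢ as in Cartan's decompositions of connection and torsion tensors). -/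
/-! The Koszul-type formula
`tauInv T (X,Y,Z) = ½ (T(X,Y,Z) - T(Y,Z,X) + T(Z,X,Y))`
inverts `τ` on forms skew in their first two arguments, and takes such forms to forms skew in
their last two. Hence each equality `τ '' 𝒜ᵢ = 𝒯ᵢ` reduces to checking that `τ` maps `𝒜ᵢ` into
`𝒯ᵢ` and `tauInv` maps `𝒯ᵢ` into `𝒜ᵢ`, which are direct computations with the defining
identities. -/

noncomputable def tauInv (T : E → E → E → ℝ) : E → E → E → ℝ :=
  fun X Y Z => (T X Y Z - T Y Z X + T Z X Y) / 2

lemma dot_comm (X Y : E) : dot X Y = dot Y X := by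
  simp only [dot, mul_comm]

lemma tau_mem_TT {A : E → E → E → ℝ} (hA : IsTri A) : tau A ∈ TT := by
  obtain ⟨h1, h2, h3, h4, h5, h6⟩ := hA
  refine ⟨⟨?_, ?_, ?_, ?_, ?_, ?_⟩, fun X Y Z => ?_⟩ <;> intros <;>
    simp only [tau, h1, h2, h3, h4, h5, h6] <;> ring

lemma tauInv_mem_AA {T : E → E → E → ℝ} (hT : T ∈ TT) : tauInv T ∈ AA := by
  obtain ⟨⟨h1, h2, h3, h4, h5, h6⟩, hskew⟩ := hT
  refine ⟨?_, fun X Y Z => ?_⟩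
  · refine ⟨?_, ?_, ?_, ?_, ?_, ?_⟩ <;> intros <;>
      simp only [tauInv, h1, h2, h3, h4, h5, h6] <;> ring
  · simp only [tauInv]
    linarith [hskew X Z Y, hskew Z Y X, hskew Y X Z]

lemma rightInvOn_tauInv_tau : Set.RightInvOn tauInv tau TT := by
  rintro T ⟨-, hskew⟩
  funext X Y Z
  simp only [tau, tauInv, hskew Y X Z, hskew Z Y X, hskew X Z Y]
  ring

lemma tau_image_eq_of_mapsTo {S S' : Set (E → E → E → ℝ)} (hS' : S' ⊆ TT)
    (hτ : Set.MapsTo tau S S') (hσ : Set.MapsTo tauInv S' S) : tau '' S = S' :=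
  ((rightInvOn_tauInv_tau.mono hS').surjOn hσ).image_eq_of_mapsTo hτ

lemma tau_apply_self_self {A : E → E → E → ℝ} (hA : A ∈ AA) (X V : E) :
    tau A X V V = A V V X := by
  have hzero : A X V V = 0 := by linarith [hA.2 X V V]
  simp only [tau, hzero, hA.2 V X V]
  ring

lemma tauInv_apply_self_self {T : E → E → E → ℝ} (hT : T ∈ TT) (V X : E) :
    tauInv T V V X = T X V V := by
  have hzero : T V V X = 0 := by linarith [hT.2 V V X]
  simp only [tauInv, hzero, hT.2 V X V]
  ring

lemma mapsTo_tau_A1_T1 : Set.MapsTo tau A1 T1 := by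
  rintro A ⟨hA, α, hα⟩
  refine ⟨tau_mem_TT hA.1, α, fun X Y Z => ?_⟩
  simp only [tau, hα, dot_comm Y X]
  ring

lemma mapsTo_tauInv_T1_A1 : Set.MapsTo tauInv T1 A1 := by
  rintro T ⟨hT, α, hα⟩
  refine ⟨tauInv_mem_AA hT, α, fun X Y Z => ?_⟩
  simp only [tauInv, hα, dot_comm Z X, dot_comm Z Y, dot_comm Y X]
  ring

lemma mapsTo_tau_A2_T2 : Set.MapsTo tau A2 T2 := by
  rintro A ⟨hA, hskew⟩
  refine ⟨tau_mem_TT hA.1, fun X Y Z => ?_⟩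
  simp only [tau]
  linarith [hA.2 X Y Z, hskew Y X Z, hA.2 X Z Y, hskew Z X Y]

lemma mapsTo_tauInv_T2_A2 : Set.MapsTo tauInv T2 A2 := by
  rintro T ⟨hT, hskew⟩
  refine ⟨tauInv_mem_AA hT, fun X Y Z => ?_⟩
  simp only [tauInv]
  linarith [hT.2 X Y Z, hT.2 Y Z X, hT.2 Z X Y, hskew Y X Z, hskew X Z Y, hskew Z Y X]

lemma mapsTo_tau_A3_T3 : Set.MapsTo tau A3 T3 := by
  rintro A ⟨hA, hcyc, htr⟩
  refine ⟨tau_mem_TT hA.1, fun X Y Z => ?_, fun X => ?_⟩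
  · simp only [tau]
    linarith [hcyc X Y Z, hcyc Y X Z]
  · simp only [tau_apply_self_self hA, htr]

lemma mapsTo_tauInv_T3_A3 : Set.MapsTo tauInv T3 A3 := by
  rintro T ⟨hT, hcyc, htr⟩
  refine ⟨tauInv_mem_AA hT, fun X Y Z => ?_, fun X => ?_⟩
  · simp only [tauInv]
    linarith [hcyc X Y Z]
  · simp only [tauInv_apply_self_self hT, htr]

/-- τ maps 𝒜₁ onto 𝒯₁, 𝒜₂ onto 𝒯₂ and 𝒜₃ onto 𝒯₃. -/
theorem stmt8 : tau '' A1 = T1 ∧ tau '' A2 = T2 ∧ tau '' A3 = T3 :=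
  ⟨tau_image_eq_of_mapsTo (fun _ h => h.1) mapsTo_tau_A1_T1 mapsTo_tauInv_T1_A1,
    tau_image_eq_of_mapsTo (fun _ h => h.1) mapsTo_tau_A2_T2 mapsTo_tauInv_T2_A2,
    tau_image_eq_of_mapsTo (fun _ h => h.1) mapsTo_tau_A3_T3 mapsTo_tauInv_T3_A3⟩
end
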